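/- For every T > 0 there is C_T < ∞ such that for all t ∈ [0,T], x ∈ ℝ^k, τ ∈ ℝ and ξ ∈ ℝ^k with ξ ≠ 0 and τ ≠ ±|ξ|, |F(t,x,τ,ξ)| ≤ C_T · [1/(1 + |τ+|ξ||/2) + 1/(1 + |τ−|ξ||/2)] · 1/(1 + |ξ|), where F(t,x,τ,ξ) = e^{−iξ·x − iτt}/(2|ξ|) · [(1 − e^{it(τ+|ξ|)})/(τ+|ξ|) − (1 − e^{it(τ−|ξ|)})/(τ−|ξ|)]. -/

import Mathlib

/-!
With `P a = ∫₀ᵗ e^{ias} ds` one has `(1 - e^{ita}) / a = -i P a`, so the kernel has modulus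
`‖P (τ + |ξ|) - P (τ - |ξ|)‖ / (2|ξ|)`. Since `‖P a‖ ≤ t` and `|a| ‖P a‖ ≤ 2`, each `P a` decays
like `1 / (1 + |a|/2)`, which settles `|ξ| ≥ 1`. For `|ξ| ≤ 1` the difference must be
`O(|ξ|)` with the same decay: `P` is `t²`-Lipschitz, and
`i b (P b - P c) = (e^{itb} - e^{itc}) - i (b - c) P c` gives `|b| ‖P b - P c‖ ≤ 2t |b - c|`.
-/

open Complex

noncomputable def phaseIntegral (t a : ℝ) : ℂ := ∫ s in (0 : ℝ)..t, exp (I * a * s)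

lemma norm_exp_I_mul_sub_exp_I_mul_le (x y : ℝ) : ‖exp (I * x) - exp (I * y)‖ ≤ |x - y| := by
  have h : exp (I * x) - exp (I * y) = exp (I * y) * (exp (I * ↑(x - y)) - 1) := by
    rw [mul_sub, ← exp_add]; push_cast; ring_nf
  rw [h, norm_mul, norm_exp_I_mul_ofReal, one_mul]
  exact Real.norm_exp_I_mul_ofReal_sub_one_le

lemma I_mul_mul_phaseIntegral (t a : ℝ) : I * a * phaseIntegral t a = exp (I * t * a) - 1 := by
  rcases eq_or_ne a 0 with rfl | ha
  · simp
  have hIa : I * a ≠ 0 := by simp [ha]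
  rw [phaseIntegral, integral_exp_mul_complex hIa, mul_div_cancel₀ _ hIa]
  simp [mul_right_comm]

lemma norm_exp_I_mul_mul (a s : ℝ) : ‖exp (I * a * s)‖ = 1 := by
  simpa [mul_assoc] using norm_exp_I_mul_ofReal (a * s)

lemma norm_phaseIntegral_le {t : ℝ} (ht : 0 ≤ t) (a : ℝ) : ‖phaseIntegral t a‖ ≤ t := by
  have h := intervalIntegral.norm_integral_le_of_norm_le_const
    (a := 0) (b := t) (C := 1) (f := fun s : ℝ => exp (I * a * s))
    (fun s _ => (norm_exp_I_mul_mul a s).le)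
  simpa [phaseIntegral, abs_of_nonneg ht] using h

lemma norm_phaseIntegral_sub_le {t : ℝ} (ht : 0 ≤ t) (b c : ℝ) :
    ‖phaseIntegral t b - phaseIntegral t c‖ ≤ t ^ 2 * |b - c| := by
  have hint (a : ℝ) : IntervalIntegrable (fun s : ℝ => exp (I * a * s)) MeasureTheory.volume 0 t :=
    (by fun_prop : Continuous fun s : ℝ => exp (I * a * s)).intervalIntegrable _ _
  have hpt : ∀ s ∈ Set.uIoc 0 t, ‖exp (I * b * s) - exp (I * c * s)‖ ≤ t * |b - c| := by
    intro s hs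
    rw [Set.uIoc_of_le ht] at hs
    calc ‖exp (I * b * s) - exp (I * c * s)‖ = ‖exp (I * ↑(b * s)) - exp (I * ↑(c * s))‖ := by
          push_cast; ring_nf
      _ ≤ |b * s - c * s| := norm_exp_I_mul_sub_exp_I_mul_le _ _
      _ = s * |b - c| := by rw [← sub_mul, abs_mul, abs_of_pos hs.1, mul_comm]
      _ ≤ t * |b - c| := by gcongr; exact hs.2
  rw [phaseIntegral, phaseIntegral, ← intervalIntegral.integral_sub (hint b) (hint c)]
  calc _ ≤ t * |b - c| * |t - 0| := intervalIntegral.norm_integral_le_of_norm_le_const hpt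
    _ = t ^ 2 * |b - c| := by rw [sub_zero, abs_of_nonneg ht]; ring

lemma norm_phaseIntegral_mul_le {t : ℝ} (ht : 0 ≤ t) (a : ℝ) :
    ‖phaseIntegral t a‖ * (1 + |a| / 2) ≤ t + 1 := by
  have h : |a| * ‖phaseIntegral t a‖ ≤ 2 := by
    calc |a| * ‖phaseIntegral t a‖ = ‖exp (I * ↑(t * a)) - 1‖ := by
          rw [show I * ↑(t * a) = I * t * a by push_cast; ring, ← I_mul_mul_phaseIntegral]; simp
      _ ≤ ‖exp (I * ↑(t * a))‖ + ‖(1 : ℂ)‖ := norm_sub_le _ _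
      _ = 2 := by rw [norm_exp_I_mul_ofReal, norm_one]; norm_num
  nlinarith [norm_phaseIntegral_le ht a]

lemma norm_phaseIntegral_sub_mul_le {t : ℝ} (ht : 0 ≤ t) (b c : ℝ) :
    ‖phaseIntegral t b - phaseIntegral t c‖ * (1 + |b| / 2) ≤ (t ^ 2 + t) * |b - c| := by
  have hid : I * b * (phaseIntegral t b - phaseIntegral t c)
      = (exp (I * ↑(t * b)) - exp (I * ↑(t * c))) - I * ↑(b - c) * phaseIntegral t c := by
    have hb := I_mul_mul_phaseIntegral t b
    have hc := I_mul_mul_phaseIntegral t c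
    simp only [ofReal_mul, ofReal_sub, ← mul_assoc]
    linear_combination hb - hc
  have h : |b| * ‖phaseIntegral t b - phaseIntegral t c‖ ≤ 2 * t * |b - c| := by
    calc |b| * ‖phaseIntegral t b - phaseIntegral t c‖
        = ‖I * b * (phaseIntegral t b - phaseIntegral t c)‖ := by simp
      _ ≤ |t * b - t * c| + |b - c| * t := by
          rw [hid]
          refine (norm_sub_le _ _).trans (add_le_add (norm_exp_I_mul_sub_exp_I_mul_le _ _) ?_)
          rw [norm_mul, norm_mul, norm_I, one_mul, norm_real, Real.norm_eq_abs]
          exact mul_le_mul_of_nonneg_left (norm_phaseIntegral_le ht c) (abs_nonneg _)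
      _ = 2 * t * |b - c| := by rw [← mul_sub, abs_mul, abs_of_nonneg ht]; ring
  nlinarith [norm_phaseIntegral_sub_le ht b c]

lemma norm_phaseIntegral_sub_div_le {T t r : ℝ} (ht0 : 0 ≤ t) (htT : t ≤ T) (hr : 0 < r) (τ : ℝ) :
    ‖phaseIntegral t (τ + r) - phaseIntegral t (τ - r)‖ / (2 * r) ≤
      2 * (T + 1) ^ 2 * (1 / (1 + |τ + r| / 2) + 1 / (1 + |τ - r| / 2)) * (1 / (1 + r)) := by
  set D := ‖phaseIntegral t (τ + r) - phaseIntegral t (τ - r)‖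
  set u := 1 / (1 + |τ + r| / 2)
  set v := 1 / (1 + |τ - r| / 2)
  have hu : 0 ≤ u := by positivity
  have hv : 0 ≤ v := by positivity
  have hT : 0 ≤ T := ht0.trans htT
  have hwb : 0 < 1 + |τ + r| / 2 := by positivity
  have hwc : 0 < 1 + |τ - r| / 2 := by positivity
  rw [div_le_iff₀ (by positivity), mul_one_div, div_mul_eq_mul_div, le_div_iff₀ (by positivity)]
  rcases le_total r 1 with hr1 | hr1
  · have h := norm_phaseIntegral_sub_mul_le ht0 (τ + r) (τ - r)
    rw [show τ + r - (τ - r) = 2 * r by ring, abs_of_pos (by positivity : (0 : ℝ) < 2 * r),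
      ← le_div_iff₀ hwb, div_eq_mul_one_div] at h
    have hlip : D ≤ (T ^ 2 + T) * (2 * r) * u := by
      refine h.trans (mul_le_mul_of_nonneg_right ?_ hu)
      gcongr
    calc D * (1 + r) ≤ (T ^ 2 + T) * (2 * r) * u * 2 := by
          gcongr
          linarith
      _ ≤ 2 * (T + 1) ^ 2 * (u + v) * (2 * r) := by
          nlinarith [mul_nonneg (mul_nonneg hr.le hv) (sq_nonneg (T + 1)),
            mul_nonneg (mul_nonneg hr.le hu) (add_nonneg hT zero_le_one)]
  · have hb := norm_phaseIntegral_mul_le ht0 (τ + r)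
    have hc := norm_phaseIntegral_mul_le ht0 (τ - r)
    rw [← le_div_iff₀ hwb, div_eq_mul_one_div] at hb
    rw [← le_div_iff₀ hwc, div_eq_mul_one_div] at hc
    have htri : D ≤ (T + 1) * (u + v) := by
      calc D ≤ ‖phaseIntegral t (τ + r)‖ + ‖phaseIntegral t (τ - r)‖ := norm_sub_le _ _
        _ ≤ (t + 1) * u + (t + 1) * v := add_le_add hb hc
        _ ≤ (T + 1) * (u + v) := by nlinarith
    nlinarith [mul_nonneg (add_nonneg hu hv) (sq_nonneg T), mul_nonneg (add_nonneg hu hv) hT]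

lemma one_sub_exp_div_eq {a : ℝ} (ha : a ≠ 0) (t : ℝ) :
    (1 - exp (I * t * a)) / a = -I * phaseIntegral t a := by
  rw [div_eq_iff (ofReal_ne_zero.mpr ha)]
  linear_combination I_mul_mul_phaseIntegral t a

theorem stmt_16_general (k : ℕ) (T : ℝ) :
    ∃ C : ℝ, ∀ t ∈ Set.Icc (0 : ℝ) T, ∀ x : EuclideanSpace ℝ (Fin k),
      ∀ τ : ℝ, ∀ ξ : EuclideanSpace ℝ (Fin k),
        ξ ≠ 0 → τ ≠ ‖ξ‖ → τ ≠ -‖ξ‖ →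
        ‖(Complex.exp (-(Complex.I * ((inner ℝ ξ x : ℝ) : ℂ)) - Complex.I * τ * t) /
              (2 * (‖ξ‖ : ℂ)) *
            ((1 - Complex.exp (Complex.I * t * ((τ : ℂ) + ‖ξ‖))) / ((τ : ℂ) + ‖ξ‖)
              - (1 - Complex.exp (Complex.I * t * ((τ : ℂ) - ‖ξ‖))) / ((τ : ℂ) - ‖ξ‖)))‖ ≤
        C * (1 / (1 + |τ + ‖ξ‖| / 2) + 1 / (1 + |τ - ‖ξ‖| / 2)) * (1 / (1 + ‖ξ‖)) := by
  refine ⟨2 * (T + 1) ^ 2, ?_⟩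
  rintro t ⟨ht0, htT⟩ x τ ξ hξ hτ₁ hτ₂
  have hr : 0 < ‖ξ‖ := norm_pos_iff.mpr hξ
  have hb : τ + ‖ξ‖ ≠ 0 := fun h => hτ₂ (by linarith)
  have hc : τ - ‖ξ‖ ≠ 0 := fun h => hτ₁ (sub_eq_zero.mp h)
  have hphase : ‖exp (-(I * ((inner ℝ ξ x : ℝ) : ℂ)) - I * τ * t)‖ = 1 := by
    rw [show -(I * ((inner ℝ ξ x : ℝ) : ℂ)) - I * τ * t = I * ↑(-(inner ℝ ξ x) - τ * t) by
      push_cast; ring]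
    exact norm_exp_I_mul_ofReal _
  rw [← ofReal_add, ← ofReal_sub, one_sub_exp_div_eq hb, one_sub_exp_div_eq hc, ← mul_sub,
    norm_mul, norm_div, hphase, norm_mul, norm_mul, norm_neg, norm_I, one_mul, Complex.norm_two,
    norm_real, Real.norm_of_nonneg hr.le, one_div_mul_eq_div]
  exact norm_phaseIntegral_sub_div_le ht0 htT hr τ

theorem stmt_16 (k : ℕ) (T : ℝ) (hT : 0 < T) :
    ∃ C : ℝ, ∀ t ∈ Set.Icc (0 : ℝ) T, ∀ x : EuclideanSpace ℝ (Fin k),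
      ∀ τ : ℝ, ∀ ξ : EuclideanSpace ℝ (Fin k),
        ξ ≠ 0 → τ ≠ ‖ξ‖ → τ ≠ -‖ξ‖ →
        ‖(Complex.exp (-(Complex.I * ((inner ℝ ξ x : ℝ) : ℂ)) - Complex.I * τ * t) /
              (2 * (‖ξ‖ : ℂ)) *
            ((1 - Complex.exp (Complex.I * t * ((τ : ℂ) + ‖ξ‖))) / ((τ : ℂ) + ‖ξ‖)
              - (1 - Complex.exp (Complex.I * t * ((τ : ℂ) - ‖ξ‖))) / ((τ : ℂ) - ‖ξ‖)))‖ ≤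
        C * (1 / (1 + |τ + ‖ξ‖| / 2) + 1 / (1 + |τ - ‖ξ‖| / 2)) * (1 / (1 + ‖ξ‖)) :=
  stmt_16_general k T
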